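/- Let $G=(V,E)$ be a finite graph. Define $\rho_q^*(G)$ as the supremum of $\sum_{v\in V}f(v)^2$ over all $f:V\to\mathbb{R}_{\ge0}$ satisfying $\sum_{u\in N_G(v)}f(u)(f(u)+f(v))\le 1$ for all $v\in V$. Then the homological connectivity of the independence complex satisfies $\eta(I(G))\ge\rho_q^*(G)$; in particular $\tilde H_i(I(G);\mathbb{R})=0$ for all $i\le\lceil\rho_q^*(G)\rceil-2$. -/

import Mathlib

open Matrix

variable {V : Type*} [Fintype V] [DecidableEq V] [LinearOrder V]

/-- Faces of the independence complex of `G` of cardinality `k`. -/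
abbrev SimpleGraph.indepFace (G : SimpleGraph V) [DecidableRel G.Adj] (k : ℕ) :=
  {σ : Finset V // σ.card = k ∧ ∀ u ∈ σ, ∀ v ∈ σ, ¬ G.Adj u v}

/-- The simplicial boundary matrix of the independence complex. -/
noncomputable def SimpleGraph.indepBoundary (G : SimpleGraph V) [DecidableRel G.Adj] (k : ℕ) :
    Matrix (G.indepFace k) (G.indepFace (k+1)) ℝ :=
  Matrix.of fun σ τ =>
    if σ.1 ⊆ τ.1 then ∑ v ∈ τ.1 \ σ.1, (-1 : ℝ) ^ ((τ.1.filter (· < v)).card) else 0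

/-- `dim H̃_k(I(G); ℝ)`. -/
noncomputable def SimpleGraph.indepHomologyDim (G : SimpleGraph V) [DecidableRel G.Adj]
    (k : ℕ) : ℕ :=
  Module.finrank ℝ (LinearMap.ker (G.indepBoundary k).mulVecLin) -
    Module.finrank ℝ (LinearMap.range (G.indepBoundary (k+1)).mulVecLin)

/-!
By induction on the number of vertices and edges of `H[A]`, every cycle of `I(H[A])` built on
faces with `k` vertices bounds as soon as `k < ∑_{v ∈ A} f v ^ 2` for a quadratic packing `f` of
`H[A]`. If some `f v = 0`, the Mayer–Vietoris sequence of `I(H[A]) = I(H[A - v]) ∪ v * link(v)`,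
where `link(v) = I(H[A - N[v]])`, reduces the claim to `A - v`, which loses no weight, and to the
link, which loses at most `1 + f v ^ 2 = 1`. If some vertex is isolated, `I(H[A])` is a cone.
Otherwise take an edge `xy` maximising `f x * f y`, oriented so that `N(y)` is the lighter
neighbourhood: the packing constraints bound the weight `∑ f ^ 2` of `N(x) ∪ N(y)` by `1`, and
the Mayer–Vietoris sequence of `I((H - xy)[A]) = I(H[A]) ∪ {x, y} * I(H[A - N(x) - N(y)])`
reduces the claim to `H - xy` and to that double link.
-/

open Finset

namespace IndepComplex

open scoped Classical

noncomputable section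

variable {α : Type*}

section Sign

variable [LinearOrder α]

/-- `(-1)` to the position of `w` in `insert w t`: the sign of the face `t` in the boundary of
`insert w t`. -/
def orderSign (w : α) (t : Finset α) : ℝ := (-1) ^ #{a ∈ t | a < w}

lemma orderSign_mul_self (w : α) (t : Finset α) : orderSign w t * orderSign w t = 1 := by
  rw [orderSign, ← pow_add]
  exact Even.neg_one_pow ⟨_, rfl⟩

variable [DecidableEq α]

lemma orderSign_insert_self (w : α) (t : Finset α) : orderSign w (insert w t) = orderSign w t := by
  rw [orderSign, orderSign, filter_insert, if_neg (lt_irrefl w)]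

lemma orderSign_insert {a : α} (w : α) {t : Finset α} (ha : a ∉ t) :
    orderSign w (insert a t) = (if a < w then -1 else 1) * orderSign w t := by
  rw [orderSign, orderSign, filter_insert]
  split_ifs
  · rw [card_insert_of_notMem (by simp [ha]), pow_succ, mul_comm]
  · rw [one_mul]

lemma orderSign_insert_mul_orderSign_insert {v w : α} {t : Finset α} (hv : v ∉ t) (hw : w ∉ t)
    (hvw : v ≠ w) :
    orderSign w (insert v t) * orderSign v (insert w t) = -(orderSign v t * orderSign w t) := by
  rw [orderSign_insert w hv, orderSign_insert v hw]
  rcases hvw.lt_or_gt with h | h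
  · rw [if_pos h, if_neg h.asymm]; ring
  · rw [if_neg h.asymm, if_pos h]; ring

lemma orderSign_mul_orderSign_insert {v w : α} {t : Finset α} (hv : v ∉ t) (hw : w ∉ t)
    (hvw : v ≠ w) :
    orderSign w t * orderSign v (insert w t) = -(orderSign v t * orderSign w (insert v t)) := by
  rw [orderSign_insert w hv, orderSign_insert v hw]
  rcases hvw.lt_or_gt with h | h
  · rw [if_pos h, if_neg h.asymm]; ring
  · rw [if_neg h.asymm, if_pos h]; ring

end Sign

lemma isIndepSet_coe_iff {H : SimpleGraph α} {s : Finset α} :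
    H.IsIndepSet (s : Set α) ↔ ∀ u ∈ s, ∀ v ∈ s, ¬ H.Adj u v :=
  ⟨fun hs _ hu _ hv huv => hs hu hv huv.ne huv, fun hs _ hu _ hv _ => hs _ hu _ hv⟩

lemma isIndepSet_insert [DecidableEq α] {H : SimpleGraph α} {s : Finset α} {w : α} :
    H.IsIndepSet (insert w s : Finset α) ↔ H.IsIndepSet (s : Set α) ∧ ∀ u ∈ s, ¬ H.Adj w u := by
  simp only [isIndepSet_coe_iff, mem_insert, forall_eq_or_imp, H.irrefl, not_false_eq_true,
    true_and]
  exact ⟨fun h => ⟨fun u hu v hv => h.2 u hu |>.2 v hv, h.1⟩,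
    fun h => ⟨h.2, fun u hu => ⟨fun hadj => h.2 u hu hadj.symm, h.1 u hu⟩⟩⟩

/-- The faces of `I(H[A])` with `k` vertices, i.e. its `(k-1)`-simplices. -/
def IsFace (H : SimpleGraph α) (A : Finset α) (k : ℕ) (s : Finset α) : Prop :=
  s ⊆ A ∧ #s = k ∧ H.IsIndepSet (s : Set α)

/-- Real chains of `I(H[A])` on faces with `k` vertices are modelled as functions on all finsets
that vanish off these faces. -/
def IsChain (H : SimpleGraph α) (A : Finset α) (k : ℕ) (u : Finset α → ℝ) : Prop :=
  ∀ s, u s ≠ 0 → IsFace H A k s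

/-- `I(H[linkVerts H A v])` is the link of `v` in `I(H[A])`. -/
def linkVerts (H : SimpleGraph α) (A : Finset α) (v : α) : Finset α :=
  {w ∈ A | w ≠ v ∧ ¬ H.Adj v w}

lemma mem_linkVerts {H : SimpleGraph α} {A : Finset α} {v w : α} :
    w ∈ linkVerts H A v ↔ w ∈ A ∧ w ≠ v ∧ ¬ H.Adj v w := by
  simp [linkVerts]

lemma linkVerts_subset (H : SimpleGraph α) (A : Finset α) (v : α) : linkVerts H A v ⊆ A :=
  fun _ hw => (mem_linkVerts.1 hw).1

lemma linkVerts_ssubset (H : SimpleGraph α) {A : Finset α} {v : α} (hv : v ∈ A) :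
    linkVerts H A v ⊂ A :=
  ssubset_of_subset_of_ne (linkVerts_subset H A v) fun h => (mem_linkVerts.1 (h ▸ hv)).2.1 rfl

section Chain

variable {H H' : SimpleGraph α} {A B : Finset α} {k : ℕ} {u c : Finset α → ℝ}

lemma IsChain.mono (hu : IsChain H A k u) (hAB : A ⊆ B) : IsChain H B k u :=
  fun s hs => ⟨(hu s hs).1.trans hAB, (hu s hs).2⟩

lemma IsChain.of_le (hu : IsChain H A k u) (hle : H' ≤ H) : IsChain H' A k u :=
  fun s hs => ⟨(hu s hs).1, (hu s hs).2.1, (hu s hs).2.2.mono' fun _ _ h h' => h (hle h')⟩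

lemma IsChain.sub (hu : IsChain H A k u) (hc : IsChain H A k c) : IsChain H A k (u - c) := by
  intro s hs
  by_cases h : u s = 0
  · exact hc s fun h' => hs (by rw [Pi.sub_apply, h, h', sub_zero])
  · exact hu s h

lemma IsChain.add (hu : IsChain H A k u) (hc : IsChain H A k c) : IsChain H A k (u + c) := by
  intro s hs
  by_cases h : u s = 0
  · exact hc s fun h' => hs (by rw [Pi.add_apply, h, h', add_zero])
  · exact hu s h

lemma IsChain.not_adj {v : α} (hc : IsChain H (linkVerts H A v) k c) :
    ∀ r, c r ≠ 0 → ∀ x ∈ r, ¬ H.Adj v x :=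
  fun r hr _ hx => (mem_linkVerts.1 ((hc r hr).1 hx)).2.2

end Chain

section Boundary

variable [DecidableEq α]

def extVerts (H : SimpleGraph α) (A s : Finset α) : Finset α :=
  {w ∈ A \ s | ∀ u ∈ s, ¬ H.Adj w u}

lemma mem_extVerts {H : SimpleGraph α} {A s : Finset α} {w : α} :
    w ∈ extVerts H A s ↔ w ∈ A ∧ w ∉ s ∧ ∀ u ∈ s, ¬ H.Adj w u := by
  simp [extVerts, and_assoc]

lemma extVerts_insert {H : SimpleGraph α} {A s : Finset α} {w : α} :
    extVerts H A (insert w s) = {p ∈ extVerts H A s | p ≠ w ∧ ¬ H.Adj p w} := by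
  ext p
  simp only [mem_extVerts, mem_filter, mem_insert, forall_eq_or_imp, not_or]
  tauto

variable [LinearOrder α]

def boundary (H : SimpleGraph α) (A : Finset α) (u : Finset α → ℝ) (s : Finset α) : ℝ :=
  ∑ w ∈ extVerts H A s, orderSign w s * u (insert w s)

def cone (v : α) (u : Finset α → ℝ) (s : Finset α) : ℝ :=
  if v ∈ s then orderSign v s * u (s.erase v) else 0

def link (v : α) (u : Finset α → ℝ) (s : Finset α) : ℝ :=
  if v ∈ s then 0 else orderSign v s * u (insert v s)

variable {H H' : SimpleGraph α} {A A₀ : Finset α} {k : ℕ} {u c : Finset α → ℝ} {v : α}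
  {s : Finset α}

lemma cone_of_mem (h : v ∈ s) : cone v u s = orderSign v s * u (s.erase v) := if_pos h

lemma cone_of_notMem (h : v ∉ s) : cone v u s = 0 := if_neg h

lemma link_of_mem (h : v ∈ s) : link v u s = 0 := if_pos h

lemma link_of_notMem (h : v ∉ s) : link v u s = orderSign v s * u (insert v s) := if_neg h

lemma ne_zero_of_cone_ne_zero (h : cone v u s ≠ 0) : v ∈ s ∧ u (s.erase v) ≠ 0 := by
  have hvs : v ∈ s := by
    by_contra hvs
    exact h (cone_of_notMem hvs)
  rw [cone_of_mem hvs] at h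
  exact ⟨hvs, right_ne_zero_of_mul h⟩

lemma cone_link_of_mem (h : v ∈ s) : cone v (link v u) s = u s := by
  have hsign := orderSign_insert_self v (s.erase v)
  rw [insert_erase h] at hsign
  rw [cone_of_mem h, link_of_notMem (notMem_erase v s), insert_erase h, ← hsign, ← mul_assoc,
    orderSign_mul_self, one_mul]

lemma boundary_add : boundary H A (u + c) = boundary H A u + boundary H A c := by
  ext s
  simp only [boundary, Pi.add_apply, mul_add, sum_add_distrib]

lemma boundary_sub : boundary H A (u - c) = boundary H A u - boundary H A c := by
  ext s
  simp only [boundary, Pi.sub_apply, mul_sub, sum_sub_distrib]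

theorem boundary_boundary (u : Finset α → ℝ) : boundary H A (boundary H A u) = 0 := by
  ext s
  set E := extVerts H A s
  -- the terms indexed by `(w, p)` and `(p, w)` cancel
  let F : α → α → ℝ := fun w p => if p ≠ w ∧ ¬ H.Adj p w then
    orderSign w s * orderSign p (insert w s) * u (insert p (insert w s)) else 0
  have hexpand : boundary H A (boundary H A u) s = ∑ w ∈ E, ∑ p ∈ E, F w p := by
    refine sum_congr rfl fun w _ => ?_
    rw [boundary, extVerts_insert, sum_filter, mul_sum]
    refine sum_congr rfl fun p _ => ?_
    simp only [F]
    split_ifs <;> ring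
  have hanti : ∀ w ∈ E, ∀ p ∈ E, F w p = -F p w := by
    intro w hw p hp
    have hcomm : (p ≠ w ∧ ¬ H.Adj p w) ↔ (w ≠ p ∧ ¬ H.Adj w p) :=
      ⟨fun h => ⟨h.1.symm, fun h' => h.2 h'.symm⟩, fun h => ⟨h.1.symm, fun h' => h.2 h'.symm⟩⟩
    simp only [F, hcomm]
    split_ifs with h
    · rw [insert_comm p w]
      linear_combination u (insert w (insert p s)) *
        orderSign_mul_orderSign_insert (mem_extVerts.1 hp).2.1 (mem_extVerts.1 hw).2.1 h.1.symm
    · rw [neg_zero]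
  have hswap : ∑ w ∈ E, ∑ p ∈ E, F w p = -∑ w ∈ E, ∑ p ∈ E, F w p := by
    rw [← sum_neg_distrib]
    refine sum_comm.trans (sum_congr rfl ?_)
    exact fun p hp => by
      rw [← sum_neg_distrib]
      exact sum_congr rfl fun w hw => hanti w hw p hp
  rw [hexpand, Pi.zero_apply]
  linarith

theorem boundary_link (v : α) (u : Finset α → ℝ) :
    boundary H (linkVerts H A v) (link v u) = -link v (boundary H A u) := by
  ext s
  by_cases hvs : v ∈ s
  · rw [Pi.neg_apply, link_of_mem hvs, neg_zero, boundary]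
    exact sum_eq_zero fun w _ => by rw [link_of_mem (mem_insert_of_mem hvs), mul_zero]
  have hext : extVerts H (linkVerts H A v) s = extVerts H A (insert v s) := by
    ext w
    simp only [mem_extVerts, mem_linkVerts, mem_insert, forall_eq_or_imp, not_or]
    constructor
    · rintro ⟨⟨hwA, hwv, hvw⟩, hws, hw⟩
      exact ⟨hwA, ⟨hwv, hws⟩, fun h => hvw h.symm, hw⟩
    · rintro ⟨hwA, ⟨hwv, hws⟩, hvw, hw⟩
      exact ⟨⟨hwA, hwv, fun h => hvw h.symm⟩, hws, hw⟩
  rw [Pi.neg_apply, link_of_notMem hvs, boundary, boundary, hext, mul_sum, ← sum_neg_distrib]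
  refine sum_congr rfl fun w hw => ?_
  have hw' := (mem_extVerts.1 hw).2.1
  rw [mem_insert, not_or] at hw'
  rw [link_of_notMem (by rw [mem_insert, not_or]; exact ⟨Ne.symm hw'.1, hvs⟩), insert_comm]
  linear_combination u (insert w (insert v s)) *
    orderSign_mul_orderSign_insert hvs hw'.2 (Ne.symm hw'.1)

lemma boundary_cone_of_notMem (hvs : v ∉ s) :
    boundary H A (cone v u) s = if v ∈ extVerts H A s then u s else 0 := by
  have hcone : ∀ w ≠ v, cone v u (insert w s) = 0 := fun w hwv =>
    cone_of_notMem (by rw [mem_insert, not_or]; exact ⟨Ne.symm hwv, hvs⟩)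
  rw [boundary]
  split_ifs with hv
  · rw [sum_eq_single_of_mem v hv fun w _ hwv => by rw [hcone w hwv, mul_zero],
      cone_of_mem (mem_insert_self v s), erase_insert hvs, orderSign_insert_self, ← mul_assoc,
      orderSign_mul_self, one_mul]
  · exact sum_eq_zero fun w hw => by rw [hcone w (ne_of_mem_of_not_mem hw hv), mul_zero]

lemma boundary_eq_add_sum_extVerts_insert {t : Finset α} (hvA : v ∈ A) (hvt : v ∉ t)
    (hvt' : ∀ x ∈ t, ¬ H.Adj v x) (hu : ∀ r, u r ≠ 0 → ∀ x ∈ r, ¬ H.Adj v x) :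
    boundary H A u t = orderSign v t * u (insert v t) +
      ∑ w ∈ extVerts H A (insert v t), orderSign w t * u (insert w t) := by
  have hsub : insert v (extVerts H A (insert v t)) ⊆ extVerts H A t := by
    refine insert_subset (mem_extVerts.2 ⟨hvA, hvt, hvt'⟩) fun w hw => ?_
    obtain ⟨hwA, hw, hwt⟩ := mem_extVerts.1 hw
    rw [mem_insert, not_or] at hw
    exact mem_extVerts.2 ⟨hwA, hw.2, fun x hx => hwt x (mem_insert_of_mem hx)⟩
  -- the remaining extensions of `t` are adjacent to `v`, so they do not support `u`
  have hvanish : ∀ w ∈ extVerts H A t, w ∉ insert v (extVerts H A (insert v t)) →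
      orderSign w t * u (insert w t) = 0 := by
    intro w hw hw'
    obtain ⟨hwA, hwt, hwt'⟩ := mem_extVerts.1 hw
    rw [mem_insert, not_or, mem_extVerts] at hw'
    have hadj : H.Adj w v := by
      by_contra hwv
      refine hw'.2 ⟨hwA, ?_, ?_⟩
      · rw [mem_insert, not_or]; exact ⟨hw'.1, hwt⟩
      · simpa [hwv] using hwt'
    have : u (insert w t) = 0 := by
      by_contra h
      exact hu _ h w (mem_insert_self w t) hadj.symm
    rw [this, mul_zero]
  rw [boundary, ← sum_subset hsub hvanish,
    sum_insert fun h => (mem_extVerts.1 h).2.1 (mem_insert_self v t)]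

lemma boundary_cone_of_mem (hvA : v ∈ A) (hvs : v ∈ s) (hs : H.IsIndepSet (s : Set α))
    (hu : ∀ r, u r ≠ 0 → ∀ x ∈ r, ¬ H.Adj v x) :
    boundary H A (cone v u) s = u s - cone v (boundary H A u) s := by
  obtain ⟨t, hvt, rfl⟩ : ∃ t, v ∉ t ∧ s = insert v t :=
    ⟨s.erase v, notMem_erase v s, (insert_erase hvs).symm⟩
  have hterm : ∀ w ∈ extVerts H A (insert v t), orderSign w (insert v t) *
      cone v u (insert w (insert v t)) = -(orderSign v t * (orderSign w t * u (insert w t))) := by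
    intro w hw
    have hw' := (mem_extVerts.1 hw).2.1
    rw [mem_insert, not_or] at hw'
    rw [cone_of_mem (mem_insert_of_mem (mem_insert_self v t)), insert_comm, erase_insert
      (by rw [mem_insert, not_or]; exact ⟨Ne.symm hw'.1, hvt⟩), orderSign_insert_self]
    linear_combination u (insert w t) *
      orderSign_insert_mul_orderSign_insert hvt hw'.2 (Ne.symm hw'.1)
  rw [cone_of_mem (mem_insert_self v t), erase_insert hvt, orderSign_insert_self,
    boundary_eq_add_sum_extVerts_insert hvA hvt (isIndepSet_insert.1 hs).2 hu, boundary,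
    sum_congr rfl hterm, sum_neg_distrib, mul_add, mul_sum, ← mul_assoc, orderSign_mul_self,
    one_mul]
  ring

lemma IsChain.boundary (hu : IsChain H A (k + 1) u) : IsChain H A k (boundary H A u) := by
  intro s hs
  obtain ⟨w, hw, hne⟩ := exists_ne_zero_of_sum_ne_zero hs
  obtain ⟨hsub, hcard, hind⟩ := hu _ (right_ne_zero_of_mul hne)
  refine ⟨(subset_insert w s).trans hsub, ?_, (isIndepSet_insert.1 hind).1⟩
  rw [card_insert_of_notMem (mem_extVerts.1 hw).2.1] at hcard
  omega

lemma IsChain.cone (hvA : v ∈ A) (hu : IsChain H A k u)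
    (hv : ∀ r, u r ≠ 0 → ∀ x ∈ r, ¬ H.Adj v x) : IsChain H A (k + 1) (cone v u) := by
  intro s hs
  obtain ⟨hvs, hne⟩ := ne_zero_of_cone_ne_zero hs
  obtain ⟨hsub, hcard, hind⟩ := hu _ hne
  rw [← insert_erase hvs]
  exact ⟨insert_subset hvA hsub, by rw [card_insert_of_notMem (notMem_erase v s), hcard],
    isIndepSet_insert.2 ⟨hind, hv _ hne⟩⟩

lemma IsChain.link (hu : IsChain H A (k + 1) u) : IsChain H (linkVerts H A v) k (link v u) := by
  intro s hs
  have hvs : v ∉ s := fun h => hs (link_of_mem h)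
  rw [link_of_notMem hvs] at hs
  obtain ⟨hsub, hcard, hind⟩ := hu _ (right_ne_zero_of_mul hs)
  obtain ⟨hind, hv⟩ := isIndepSet_insert.1 hind
  refine ⟨fun w hw => ?_, by rw [card_insert_of_notMem hvs] at hcard; omega, hind⟩
  exact mem_linkVerts.2 ⟨hsub (mem_insert_of_mem hw), ne_of_mem_of_not_mem hw hvs, hv w hw⟩

lemma boundary_of_subset (hA : A₀ ⊆ A) (hu : ∀ r, u r ≠ 0 → r ⊆ A₀) :
    boundary H A u = boundary H A₀ u := by
  ext s
  refine (sum_subset (fun w hw => ?_) fun w hw hw₀ => ?_).symm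
  · obtain ⟨hwA, hws, hw⟩ := mem_extVerts.1 hw
    exact mem_extVerts.2 ⟨hA hwA, hws, hw⟩
  · obtain ⟨-, hws, hw⟩ := mem_extVerts.1 hw
    have : u (insert w s) = 0 := by
      by_contra h
      exact hw₀ (mem_extVerts.2 ⟨hu _ h (mem_insert_self w s), hws, hw⟩)
    rw [this, mul_zero]

lemma boundary_of_le (hle : H' ≤ H) (hu : ∀ r, u r ≠ 0 → H.IsIndepSet (r : Set α)) :
    boundary H' A u = boundary H A u := by
  ext s
  refine (sum_subset (fun w hw => ?_) fun w hw hw' => ?_).symm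
  · obtain ⟨hwA, hws, hw⟩ := mem_extVerts.1 hw
    exact mem_extVerts.2 ⟨hwA, hws, fun x hx h => hw x hx (hle h)⟩
  · obtain ⟨hwA, hws, -⟩ := mem_extVerts.1 hw
    have : u (insert w s) = 0 := by
      by_contra h
      exact hw' (mem_extVerts.2 ⟨hwA, hws, (isIndepSet_insert.1 (hu _ h)).2⟩)
    rw [this, mul_zero]

end Boundary

section Acyclicity

variable [DecidableEq α] [LinearOrder α] {H : SimpleGraph α} {A : Finset α} {k : ℕ}
  {u : Finset α → ℝ} {v x y : α}

lemma link_zero : link v (0 : Finset α → ℝ) = 0 := by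
  ext s
  simp [link]

lemma link_neg : link v (-u) = -link v u := by
  ext s
  by_cases h : v ∈ s <;> simp [link, h]

lemma link_link_of_adj (hxy : H.Adj x y) (hu : ∀ r, u r ≠ 0 → H.IsIndepSet (r : Set α)) :
    link x (link y u) = 0 := by
  ext s
  have : u (insert y (insert x s)) = 0 := by
    by_contra h
    exact isIndepSet_coe_iff.1 (hu _ h) x (mem_insert_of_mem (mem_insert_self x s)) y
      (mem_insert_self y _) hxy
  by_cases hx : x ∈ s
  · rw [link_of_mem hx, Pi.zero_apply]
  · by_cases hy : y ∈ insert x s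
    · rw [link_of_notMem hx, link_of_mem hy, mul_zero, Pi.zero_apply]
    · rw [link_of_notMem hx, link_of_notMem hy, this, mul_zero, mul_zero, Pi.zero_apply]

/-- `H̃_{k-1}(I(H[A]); ℝ) = 0`, stated with the augmented boundary: for `k = 0` it says that `A`
is nonempty. -/
def CyclesAreBoundaries (H : SimpleGraph α) (A : Finset α) (k : ℕ) : Prop :=
  ∀ u, IsChain H A k u → boundary H A u = 0 → ∃ c, IsChain H A (k + 1) c ∧ boundary H A c = u

lemma boundary_cone_eq_self (hvA : v ∈ A) (hu : IsChain H A k u)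
    (hv : ∀ r, u r ≠ 0 → ∀ x ∈ r, ¬ H.Adj v x) (hcyc : boundary H A u = 0) :
    boundary H A (cone v u) = u := by
  ext s
  by_cases hface : s ⊆ A ∧ H.IsIndepSet (s : Set α)
  · by_cases hvs : v ∈ s
    · rw [boundary_cone_of_mem hvA hvs hface.2 hv, cone_of_mem hvs, hcyc, Pi.zero_apply,
        mul_zero, sub_zero]
    · rw [boundary_cone_of_notMem hvs, ite_eq_left_iff]
      intro hext
      by_contra h
      exact hext (mem_extVerts.2 ⟨hvA, hvs, fun x hx => hv s (Ne.symm h) x hx⟩)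
  · have hus : u s = 0 := by
      by_contra h
      exact hface ⟨(hu s h).1, (hu s h).2.2⟩
    have hbs : boundary H A (cone v u) s = 0 := by
      by_contra h
      have := (hu.cone hvA hv).boundary s h
      exact hface ⟨this.1, this.2.2⟩
    rw [hus, hbs]

lemma cyclesAreBoundaries_zero (hA : A.Nonempty) : CyclesAreBoundaries H A 0 := by
  intro u hu hcyc
  obtain ⟨v, hv⟩ := hA
  have hvu : ∀ r, u r ≠ 0 → ∀ x ∈ r, ¬ H.Adj v x := fun r hr x hx => by
    rw [card_eq_zero.1 (hu r hr).2.1] at hx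
    exact absurd hx (notMem_empty x)
  exact ⟨cone v u, hu.cone hv hvu, boundary_cone_eq_self hv hu hvu hcyc⟩

lemma cyclesAreBoundaries_of_forall_not_adj (hvA : v ∈ A) (hv : ∀ w ∈ A, ¬ H.Adj v w) :
    CyclesAreBoundaries H A k := by
  intro u hu hcyc
  have hvu : ∀ r, u r ≠ 0 → ∀ x ∈ r, ¬ H.Adj v x := fun r hr x hx => hv x ((hu r hr).1 hx)
  exact ⟨cone v u, hu.cone hvA hvu, boundary_cone_eq_self hvA hu hvu hcyc⟩

/-- Mayer–Vietoris for `I(H[A]) = I(H[A - v]) ∪ (v * I(H[A - N[v]]))`. -/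
theorem cyclesAreBoundaries_of_erase_of_linkVerts (hvA : v ∈ A)
    (hdel : CyclesAreBoundaries H (A.erase v) (k + 1))
    (hlink : CyclesAreBoundaries H (linkVerts H A v) k) :
    CyclesAreBoundaries H A (k + 1) := by
  intro u hu hcyc
  have hLA := linkVerts_subset H A v
  obtain ⟨c', hc', hc'u⟩ := hlink (link v u) hu.link (by
    rw [boundary_link, hcyc, link_zero, neg_zero])
  have hcone := (hc'.mono hLA).cone hvA hc'.not_adj
  have hbd : boundary H A c' = link v u := by
    rw [boundary_of_subset hLA fun r hr => (hc' r hr).1, hc'u]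
  -- correcting `u` by the boundary of the cone over `c'` kills its faces through `v`
  have hz : IsChain H (A.erase v) (k + 1) (u + boundary H A (cone v c')) := by
    intro s hs
    obtain ⟨hsA, hcard, hind⟩ := (hu.add hcone.boundary) s hs
    refine ⟨fun w hw => mem_erase.2 ⟨?_, hsA hw⟩, hcard, hind⟩
    rintro rfl
    have hc's : c' s = 0 := by
      by_contra h
      exact (mem_linkVerts.1 ((hc' s h).1 hw)).2.1 rfl
    apply hs
    rw [Pi.add_apply, boundary_cone_of_mem hvA hw hind hc'.not_adj, hbd, cone_link_of_mem hw, hc's]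
    ring
  obtain ⟨c, hc, hcz⟩ := hdel _ hz (by
    rw [← boundary_of_subset (erase_subset v A) fun r hr => (hz r hr).1, boundary_add, hcyc,
      boundary_boundary, add_zero])
  refine ⟨c - cone v c', (hc.mono (erase_subset v A)).sub hcone, ?_⟩
  rw [boundary_sub, boundary_of_subset (erase_subset v A) fun r hr => (hc r hr).1, hcz,
    add_sub_cancel_right]

lemma boundary_cone_cone_of_mem {s : Finset α} {c₁ c₂ : Finset α → ℝ} (hy : y ∈ A)
    (hx : x ∈ linkVerts H A y)
    (hc₂ : ∀ r, c₂ r ≠ 0 → r ⊆ linkVerts H (linkVerts H A y) x)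
    (hbd : boundary H (linkVerts H (linkVerts H A y) x) c₂ = link x (link y c₁))
    (hxs : x ∈ s) (hys : y ∈ s) (hs : H.IsIndepSet (s : Set α)) :
    boundary H A (cone y (cone x c₂)) s = c₁ s := by
  have hLyA := linkVerts_subset H A y
  have hLLy := linkVerts_subset H (linkVerts H A y) x
  have hxy : x ≠ y := (mem_linkVerts.1 hx).2.1
  have hc₂x : ∀ r, c₂ r ≠ 0 → ∀ w ∈ r, ¬ H.Adj x w := fun r hr w hw =>
    (mem_linkVerts.1 (hc₂ r hr hw)).2.2
  have hc₂y : ∀ r, c₂ r ≠ 0 → ∀ w ∈ r, w ≠ x ∧ w ≠ y := fun r hr w hw =>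
    ⟨(mem_linkVerts.1 (hc₂ r hr hw)).2.1, (mem_linkVerts.1 (hLLy (hc₂ r hr hw))).2.1⟩
  have hcone : ∀ r, cone x c₂ r ≠ 0 → r ⊆ linkVerts H A y := by
    intro r hr w hw
    obtain ⟨-, hne⟩ := ne_zero_of_cone_ne_zero hr
    by_cases hwx : w = x
    · exact hwx ▸ hx
    · exact hLLy (hc₂ _ hne (mem_erase.2 ⟨hwx, hw⟩))
  have hxt : x ∈ s.erase y := mem_erase.2 ⟨hxy, hxs⟩
  have hc₂s : ∀ t, x ∈ t ∨ y ∈ t → c₂ t = 0 := fun t ht => by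
    by_contra h
    rcases ht with ht | ht
    · exact (hc₂y t h x ht).1 rfl
    · exact (hc₂y t h y ht).2 rfl
  have hinner : boundary H (linkVerts H A y) (cone x c₂) (s.erase y) =
      -link y c₁ (s.erase y) := by
    rw [boundary_cone_of_mem hx hxt (Set.Pairwise.mono (coe_subset.2 (erase_subset y s)) hs) hc₂x,
      boundary_of_subset hLLy hc₂, hbd, cone_link_of_mem hxt, hc₂s _ (Or.inl hxt), zero_sub]
  have hc₁ := cone_link_of_mem (u := c₁) hys
  rw [cone_of_mem hys] at hc₁
  rw [boundary_cone_of_mem hy hys hs fun r hr w hw => (mem_linkVerts.1 (hcone r hr hw)).2.2,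
    cone_of_mem hys, boundary_of_subset hLyA hcone, hinner, cone_of_mem hxs,
    hc₂s _ (Or.inr (mem_erase.2 ⟨hxy.symm, hys⟩)), mul_zero, ← hc₁]
  ring

/-- Mayer–Vietoris for `I((H - xy)[A]) = I(H[A]) ∪ {x, y} * I(H[A - N(x) - N(y)])`. -/
theorem cyclesAreBoundaries_of_deleteEdges (hx : x ∈ A) (hy : y ∈ A) (hxy : H.Adj x y)
    (hdel : CyclesAreBoundaries (H.deleteEdges {s(x, y)}) A (k + 1))
    (hlink : CyclesAreBoundaries (H.deleteEdges {s(x, y)})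
      (linkVerts (H.deleteEdges {s(x, y)}) (linkVerts (H.deleteEdges {s(x, y)}) A y) x) k) :
    CyclesAreBoundaries H A (k + 1) := by
  set H' := H.deleteEdges {s(x, y)}
  have hle : H' ≤ H := H.deleteEdges_le _
  have hxLy : x ∈ linkVerts H' A y := mem_linkVerts.2 ⟨hx, hxy.ne, by simp [H', Sym2.eq_swap]⟩
  have hLyA := linkVerts_subset H' A y
  have hLLy := linkVerts_subset H' (linkVerts H' A y) x
  intro u hu hcyc
  have huH : ∀ r, u r ≠ 0 → H.IsIndepSet (r : Set α) := fun r hr => (hu r hr).2.2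
  obtain ⟨c₁, hc₁, hc₁u⟩ := hdel u (hu.of_le hle) (by rw [boundary_of_le hle huH, hcyc])
  obtain ⟨c₂, hc₂, hc₂b⟩ := hlink (link x (link y c₁)) hc₁.link.link (by
    rw [boundary_link, boundary_link, hc₁u, link_neg, neg_neg, link_link_of_adj hxy huH])
  have hcx : IsChain H' (linkVerts H' A y) (k + 2) (cone x c₂) :=
    (hc₂.mono hLLy).cone hxLy hc₂.not_adj
  have hcone : IsChain H' A (k + 3) (cone y (cone x c₂)) := (hcx.mono hLyA).cone hy hcx.not_adj
  have hc : IsChain H' A (k + 2) (c₁ - boundary H' A (cone y (cone x c₂))) :=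
    hc₁.sub hcone.boundary
  -- the faces of `I(H')` that are not faces of `I(H)` contain `x` and `y`
  have hcH : IsChain H A (k + 2) (c₁ - boundary H' A (cone y (cone x c₂))) := by
    intro s hs
    obtain ⟨hsA, hcard, hind⟩ := hc s hs
    refine ⟨hsA, hcard, isIndepSet_coe_iff.2 fun a ha b hb hab => hs ?_⟩
    have hxys : x ∈ s ∧ y ∈ s := by
      have := isIndepSet_coe_iff.1 hind a ha b hb
      simp only [H', SimpleGraph.deleteEdges_adj, hab, Set.mem_singleton_iff, Sym2.eq_iff,
        true_and, not_not] at this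
      rcases this with ⟨rfl, rfl⟩ | ⟨rfl, rfl⟩
      exacts [⟨ha, hb⟩, ⟨hb, ha⟩]
    rw [Pi.sub_apply, boundary_cone_cone_of_mem hy hxLy (fun r hr => (hc₂ r hr).1) hc₂b hxys.1
      hxys.2 hind, sub_self]
  refine ⟨_, hcH, ?_⟩
  rw [← boundary_of_le hle fun r hr => (hcH r hr).2.2, boundary_sub, hc₁u, boundary_boundary,
    sub_zero]

end Acyclicity

section Packing

variable {H H' : SimpleGraph α} {A A₀ : Finset α} {f : α → ℝ} {v x y : α}

def IsQuadraticPacking (H : SimpleGraph α) (A : Finset α) (f : α → ℝ) : Prop :=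
  ∀ v ∈ A, ∑ u ∈ A with H.Adj v u, f u * (f u + f v) ≤ 1

lemma IsQuadraticPacking.mono (hpack : IsQuadraticPacking H A f) (hf : ∀ x, 0 ≤ f x)
    (hle : H' ≤ H) (hA : A₀ ⊆ A) : IsQuadraticPacking H' A₀ f := by
  intro v hv
  refine le_trans (sum_le_sum_of_subset_of_nonneg (fun u hu => ?_) fun u _ _ => ?_)
    (hpack v (hA hv))
  · rw [mem_filter] at hu ⊢
    exact ⟨hA hu.1, hle hu.2⟩
  · exact mul_nonneg (hf u) (add_nonneg (hf u) (hf v))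

lemma IsQuadraticPacking.sum_sq_nbrs_le_one (hpack : IsQuadraticPacking H A f) (hf : ∀ x, 0 ≤ f x)
    (hv : v ∈ A) : ∑ u ∈ A with H.Adj v u, f u ^ 2 ≤ 1 :=
  le_trans (sum_le_sum fun u _ => by nlinarith [hf u, hf v]) (hpack v hv)

lemma IsQuadraticPacking.sum_sq_le_sum_sq_linkVerts (hpack : IsQuadraticPacking H A f)
    (hf : ∀ x, 0 ≤ f x) (hv : v ∈ A) :
    ∑ w ∈ A, f w ^ 2 ≤ ∑ w ∈ linkVerts H A v, f w ^ 2 + f v ^ 2 + 1 := by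
  have hsub : {w ∈ A | ¬ (w ≠ v ∧ ¬ H.Adj v w)} ⊆ insert v {w ∈ A | H.Adj v w} := by
    intro w hw
    rw [mem_filter, not_and_or, not_not, not_not] at hw
    rw [mem_insert, mem_filter]
    tauto
  have hrest := sum_le_sum_of_subset_of_nonneg hsub fun w _ _ => sq_nonneg (f w)
  rw [sum_insert fun h => H.irrefl (mem_filter.1 h).2] at hrest
  rw [← sum_filter_add_sum_filter_not A fun w => w ≠ v ∧ ¬ H.Adj v w, linkVerts]
  linarith [hpack.sum_sq_nbrs_le_one hf hv]

/-- On `N(y) - N(x)` maximality gives `f w ≤ f x`, so this part weighs at most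
`f x * ∑_{N(y)} f ≤ f x * ∑_{N(x)} f`, which is exactly the slack of the constraint at `x`. -/
lemma IsQuadraticPacking.sum_sq_nbrs_union_le_one_of_max (hpack : IsQuadraticPacking H A f)
    (hf : ∀ x, 0 ≤ f x) (hx : x ∈ A) (hy : y ∈ A) (hfy : 0 < f y)
    (hmax : ∀ a ∈ A, ∀ b ∈ A, H.Adj a b → f a * f b ≤ f x * f y)
    (hord : ∑ w ∈ A with H.Adj y w, f w ≤ ∑ w ∈ A with H.Adj x w, f w) :
    ∑ w ∈ A with H.Adj x w ∨ H.Adj y w, f w ^ 2 ≤ 1 := by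
  have hNx : ∑ w ∈ A with H.Adj x w, f w ^ 2 + f x * ∑ w ∈ A with H.Adj x w, f w ≤ 1 :=
    calc _ = ∑ w ∈ A with H.Adj x w, f w * (f w + f x) := by
          rw [mul_sum, ← sum_add_distrib]
          exact sum_congr rfl fun w _ => by ring
      _ ≤ 1 := hpack x hx
  have hNy : ∑ w ∈ A with (H.Adj x w ∨ H.Adj y w) ∧ ¬ H.Adj x w, f w ^ 2 ≤
      f x * ∑ w ∈ A with H.Adj y w, f w := by
    have hsub : {w ∈ A | (H.Adj x w ∨ H.Adj y w) ∧ ¬ H.Adj x w} ⊆ {w ∈ A | H.Adj y w} := by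
      intro w hw
      simp only [mem_filter] at hw ⊢
      tauto
    rw [mul_sum]
    refine le_trans (sum_le_sum fun w hw => ?_)
      (sum_le_sum_of_subset_of_nonneg hsub fun w _ _ => mul_nonneg (hf x) (hf w))
    obtain ⟨hwA, hyw⟩ := mem_filter.1 (hsub hw)
    have : f w ≤ f x := le_of_mul_le_mul_left (by linarith [hmax y hy w hwA hyw]) hfy
    nlinarith [hf w]
  rw [← sum_filter_add_sum_filter_not _ fun w => H.Adj x w, filter_filter, filter_filter]
  have hx' : {w ∈ A | (H.Adj x w ∨ H.Adj y w) ∧ H.Adj x w} = {w ∈ A | H.Adj x w} :=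
    filter_congr fun w _ => by tauto
  rw [hx']
  nlinarith [hf x]

lemma IsQuadraticPacking.exists_adj_sum_sq_nbrs_union_le_one (hpack : IsQuadraticPacking H A f)
    (hf : ∀ x, 0 ≤ f x) (hpos : ∀ v ∈ A, f v ≠ 0) (hedge : ∃ a ∈ A, ∃ b ∈ A, H.Adj a b) :
    ∃ x ∈ A, ∃ y ∈ A, H.Adj x y ∧ ∑ w ∈ A with H.Adj x w ∨ H.Adj y w, f w ^ 2 ≤ 1 := by
  obtain ⟨a, ha, b, hb, hab⟩ := hedge
  obtain ⟨p, hp, hmax⟩ := exists_max_image {p ∈ A ×ˢ A | H.Adj p.1 p.2}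
    (fun p => f p.1 * f p.2) ⟨(a, b), mem_filter.2 ⟨mem_product.2 ⟨ha, hb⟩, hab⟩⟩
  obtain ⟨⟨hp₁, hp₂⟩, hp⟩ : (p.1 ∈ A ∧ p.2 ∈ A) ∧ H.Adj p.1 p.2 := by
    simpa only [mem_filter, mem_product] using hp
  have hmax' : ∀ a ∈ A, ∀ b ∈ A, H.Adj a b → f a * f b ≤ f p.1 * f p.2 := fun a ha b hb hab =>
    hmax (a, b) (mem_filter.2 ⟨mem_product.2 ⟨ha, hb⟩, hab⟩)
  rcases le_total (∑ w ∈ A with H.Adj p.2 w, f w) (∑ w ∈ A with H.Adj p.1 w, f w) with h | h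
  · exact ⟨p.1, hp₁, p.2, hp₂, hp, hpack.sum_sq_nbrs_union_le_one_of_max hf hp₁ hp₂
      ((hf _).lt_of_ne' (hpos _ hp₂)) hmax' h⟩
  · refine ⟨p.2, hp₂, p.1, hp₁, hp.symm, hpack.sum_sq_nbrs_union_le_one_of_max hf hp₂ hp₁
      ((hf _).lt_of_ne' (hpos _ hp₁)) (fun a ha b hb hab => ?_) h⟩
    rw [mul_comm (f p.2)]
    exact hmax' a ha b hb hab

lemma sum_sq_le_sum_sq_linkVerts_linkVerts_add (hle : H' ≤ H) (hxy : H.Adj x y) :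
    ∑ w ∈ A, f w ^ 2 ≤ ∑ w ∈ linkVerts H' (linkVerts H' A y) x, f w ^ 2 +
      ∑ w ∈ A with H.Adj x w ∨ H.Adj y w, f w ^ 2 := by
  have hsub : {w ∈ A | ¬ (H.Adj x w ∨ H.Adj y w)} ⊆ linkVerts H' (linkVerts H' A y) x := by
    intro w hw
    rw [mem_filter, not_or] at hw
    obtain ⟨hwA, hxw, hyw⟩ := hw
    refine mem_linkVerts.2 ⟨mem_linkVerts.2 ⟨hwA, ?_, fun h => hyw (hle h)⟩, ?_,
      fun h => hxw (hle h)⟩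
    · rintro rfl
      exact hxw hxy
    · rintro rfl
      exact hyw hxy.symm
  rw [← sum_filter_add_sum_filter_not A fun w => H.Adj x w ∨ H.Adj y w]
  linarith [sum_le_sum_of_subset_of_nonneg hsub fun w _ _ => sq_nonneg (f w)]

end Packing

section Complexity

variable {H H' : SimpleGraph α} {A A₀ : Finset α} {x y : α}

def complexity (H : SimpleGraph α) (A : Finset α) : ℕ :=
  #A + #{p ∈ A ×ˢ A | H.Adj p.1 p.2}

lemma filter_adj_subset (hle : H' ≤ H) (hA : A₀ ⊆ A) :
    {p ∈ A₀ ×ˢ A₀ | H'.Adj p.1 p.2} ⊆ {p ∈ A ×ˢ A | H.Adj p.1 p.2} := by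
  intro p hp
  simp only [mem_filter, mem_product] at hp ⊢
  exact ⟨⟨hA hp.1.1, hA hp.1.2⟩, hle hp.2⟩

lemma complexity_lt_of_le_of_ssubset (hle : H' ≤ H) (hA : A₀ ⊂ A) :
    complexity H' A₀ < complexity H A := by
  have := card_lt_card hA
  have := card_le_card (filter_adj_subset hle hA.subset)
  unfold complexity
  omega

lemma complexity_lt_of_le_of_adj (hle : H' ≤ H) (hx : x ∈ A) (hy : y ∈ A) (hxy : H.Adj x y)
    (hxy' : ¬ H'.Adj x y) : complexity H' A < complexity H A := by
  have : #{p ∈ A ×ˢ A | H'.Adj p.1 p.2} < #{p ∈ A ×ˢ A | H.Adj p.1 p.2} :=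
    card_lt_card ((ssubset_iff_of_subset (filter_adj_subset hle subset_rfl)).2
      ⟨(x, y), by simp [hx, hy, hxy], by simp [hxy']⟩)
  unfold complexity
  omega

end Complexity

theorem cyclesAreBoundaries_of_isQuadraticPacking [DecidableEq α] [LinearOrder α]
    (H : SimpleGraph α) (A : Finset α) (f : α → ℝ) (hf : ∀ x, 0 ≤ f x)
    (hpack : IsQuadraticPacking H A f) (k : ℕ) (hk : (k : ℝ) < ∑ v ∈ A, f v ^ 2) :
    CyclesAreBoundaries H A k := by
  have hA : A.Nonempty := nonempty_of_sum_ne_zero ((Nat.cast_nonneg k).trans_lt hk).ne'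
  obtain _ | k := k
  · exact cyclesAreBoundaries_zero hA
  push_cast at hk
  by_cases hzero : ∃ v ∈ A, f v = 0
  · obtain ⟨v, hvA, hfv⟩ := hzero
    have : complexity H (A.erase v) < complexity H A :=
      complexity_lt_of_le_of_ssubset le_rfl (erase_ssubset hvA)
    have : complexity H (linkVerts H A v) < complexity H A :=
      complexity_lt_of_le_of_ssubset le_rfl (linkVerts_ssubset H hvA)
    have hk₁ : ((k + 1 : ℕ) : ℝ) < ∑ w ∈ A.erase v, f w ^ 2 := by
      rw [sum_erase_eq_sub hvA, hfv]
      push_cast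
      linarith
    have hk₂ : (k : ℝ) < ∑ w ∈ linkVerts H A v, f w ^ 2 := by
      have := hpack.sum_sq_le_sum_sq_linkVerts hf hvA
      rw [hfv] at this
      linarith
    exact cyclesAreBoundaries_of_erase_of_linkVerts hvA
      (cyclesAreBoundaries_of_isQuadraticPacking H _ f hf
        (hpack.mono hf le_rfl (erase_subset v A)) _ hk₁)
      (cyclesAreBoundaries_of_isQuadraticPacking H _ f hf
        (hpack.mono hf le_rfl (linkVerts_subset H A v)) _ hk₂)
  by_cases hiso : ∃ v ∈ A, ∀ w ∈ A, ¬ H.Adj v w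
  · obtain ⟨v, hvA, hv⟩ := hiso
    exact cyclesAreBoundaries_of_forall_not_adj hvA hv
  obtain ⟨x, hx, y, hy, hxy, hnbrs⟩ := hpack.exists_adj_sum_sq_nbrs_union_le_one hf
    (fun v hv h => hzero ⟨v, hv, h⟩) (by
      obtain ⟨v, hv⟩ := hA
      by_contra h
      exact hiso ⟨v, hv, fun w hw hvw => h ⟨v, hv, w, hw, hvw⟩⟩)
  set H' := H.deleteEdges {s(x, y)}
  have hle : H' ≤ H := H.deleteEdges_le _
  set L := linkVerts H' (linkVerts H' A y) x
  have hLA : L ⊂ A := ssubset_of_subset_of_ne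
    ((linkVerts_subset _ _ _).trans (linkVerts_subset _ _ _))
    fun h => (mem_linkVerts.1 (h ▸ hx)).2.1 rfl
  have : complexity H' A < complexity H A :=
    complexity_lt_of_le_of_adj hle hx hy hxy (by simp [H'])
  have : complexity H' L < complexity H A := complexity_lt_of_le_of_ssubset hle hLA
  have hk₂ : (k : ℝ) < ∑ w ∈ L, f w ^ 2 := by
    linarith [sum_sq_le_sum_sq_linkVerts_linkVerts_add (A := A) (f := f) hle hxy]
  exact cyclesAreBoundaries_of_deleteEdges hx hy hxy
    (cyclesAreBoundaries_of_isQuadraticPacking H' A f hf (hpack.mono hf hle subset_rfl) _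
      (by push_cast; exact hk))
    (cyclesAreBoundaries_of_isQuadraticPacking H' L f hf (hpack.mono hf hle hLA.subset) _ hk₂)
termination_by complexity H A

end

end IndepComplex

open IndepComplex

namespace SimpleGraph

variable {α : Type*} (G : SimpleGraph α) [DecidableRel G.Adj] {k : ℕ}

noncomputable def faceChain (k : ℕ) (z : G.indepFace k → ℝ) : Finset α → ℝ := fun s =>
  if h : #s = k ∧ ∀ u ∈ s, ∀ v ∈ s, ¬ G.Adj u v then z ⟨s, h⟩ else 0

variable {G}

lemma faceChain_apply (z : G.indepFace k → ℝ) (σ : G.indepFace k) : G.faceChain k z σ.1 = z σ :=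
  dif_pos σ.2

lemma faceChain_zero : G.faceChain k 0 = 0 := by
  ext s
  simp [faceChain]

lemma isChain_faceChain [Fintype α] (z : G.indepFace k → ℝ) :
    IsChain G univ k (G.faceChain k z) := by
  intro s hs
  by_cases h : #s = k ∧ ∀ u ∈ s, ∀ v ∈ s, ¬ G.Adj u v
  · exact ⟨subset_univ s, h.1, isIndepSet_coe_iff.2 h.2⟩
  · exact absurd (dif_neg h) hs

lemma faceChain_restrict [Fintype α] {c : Finset α → ℝ} (hc : IsChain G univ k c) :
    G.faceChain k (fun σ => c σ.1) = c := by
  ext s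
  by_cases h : #s = k ∧ ∀ u ∈ s, ∀ v ∈ s, ¬ G.Adj u v
  · exact dif_pos h
  · rw [faceChain, dif_neg h]
    by_contra hs
    exact h ⟨(hc s (Ne.symm hs)).2.1, isIndepSet_coe_iff.1 (hc s (Ne.symm hs)).2.2⟩

variable [DecidableEq α] [LinearOrder α]

lemma indepBoundary_apply_of_eq_insert {σ : G.indepFace k} {τ : G.indepFace (k + 1)} {w : α}
    (hw : w ∉ σ.1) (hτ : τ.1 = insert w σ.1) : G.indepBoundary k σ τ = orderSign w σ.1 := by
  rw [indepBoundary, of_apply, if_pos (hτ ▸ subset_insert w σ.1), hτ,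
    insert_sdiff_of_notMem _ hw, sdiff_self, bot_eq_empty, insert_empty, sum_singleton]
  exact orderSign_insert_self w σ.1

lemma exists_eq_insert_of_indepBoundary_ne_zero [Fintype α] {σ : G.indepFace k}
    {τ : G.indepFace (k + 1)} (h : G.indepBoundary k σ τ ≠ 0) :
    ∃ w ∈ extVerts G univ σ.1, insert w σ.1 = τ.1 := by
  have hsub : σ.1 ⊆ τ.1 := by
    by_contra h'
    exact h (by rw [indepBoundary, of_apply, if_neg h'])
  obtain ⟨w, hws, hτw⟩ := exists_eq_insert_iff.2 ⟨hsub, by rw [σ.2.1, τ.2.1]⟩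
  have hwτ : w ∈ τ.1 := hτw ▸ mem_insert_self w σ.1
  exact ⟨w, mem_extVerts.2 ⟨mem_univ w, hws, fun u hu => τ.2.2 w hwτ u (hsub hu)⟩, hτw⟩

lemma faceChain_mulVec [Fintype α] (z : G.indepFace (k + 1) → ℝ) :
    G.faceChain k (G.indepBoundary k *ᵥ z) = boundary G univ (G.faceChain (k + 1) z) := by
  ext s
  by_cases hs : #s = k ∧ ∀ u ∈ s, ∀ v ∈ s, ¬ G.Adj u v
  swap
  · rw [faceChain, dif_neg hs]
    by_contra h
    have := (isChain_faceChain z).boundary s (Ne.symm h)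
    exact hs ⟨this.2.1, isIndepSet_coe_iff.1 this.2.2⟩
  have hface : ∀ w ∈ extVerts G univ s, #(insert w s) = k + 1 ∧
      ∀ u ∈ insert w s, ∀ v ∈ insert w s, ¬ G.Adj u v := fun w hw => by
    obtain ⟨-, hws, hw⟩ := mem_extVerts.1 hw
    refine ⟨by rw [card_insert_of_notMem hws, hs.1], isIndepSet_coe_iff.1 ?_⟩
    exact isIndepSet_insert.2 ⟨isIndepSet_coe_iff.2 hs.2, hw⟩
  rw [faceChain, dif_pos hs, boundary]
  change ∑ τ, G.indepBoundary k ⟨s, hs⟩ τ * z τ = _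
  symm
  refine sum_bij_ne_zero (fun w hw _ => ⟨insert w s, hface w hw⟩) (fun _ _ _ => mem_univ _)
    (fun w hw _ w' hw' _ h => (insert_inj (mem_extVerts.1 hw).2.1).1 (congrArg Subtype.val h))
    (fun τ _ hτ => ?_) (fun w hw _ => ?_)
  · obtain ⟨w, hw, hτw⟩ :=
      exists_eq_insert_of_indepBoundary_ne_zero (σ := ⟨s, hs⟩) (left_ne_zero_of_mul hτ)
    exact ⟨w, hw, mul_ne_zero (left_ne_zero_of_mul_eq_one (orderSign_mul_self w s))
        (by rw [hτw, faceChain_apply]; exact right_ne_zero_of_mul hτ), Subtype.ext hτw⟩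
  · congr 1
    · exact (indepBoundary_apply_of_eq_insert (σ := ⟨s, hs⟩) (τ := ⟨insert w s, hface w hw⟩)
        (mem_extVerts.1 hw).2.1 rfl).symm
    · exact faceChain_apply z ⟨insert w s, hface w hw⟩

end SimpleGraph

/-- Let `ρ*_q(G)` be the supremum of `∑_v (f v)^2` over all fractional
quadratic packings `f : V → ℝ≥0` (i.e. `∑_{u ∈ N_G(v)} f u * (f u + f v) ≤ 1` for all `v`).
Then the homological connectivity satisfies `η(I(G)) ≥ ρ*_q(G)`: for every fractional
quadratic packing `f`, `H̃_i(I(G); ℝ) = 0` for all `i` with `i + 1 < ∑_v (f v)^2`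
(equivalently, for all `i ≤ ⌈∑_v (f v)^2⌉ - 2`). -/
theorem indep_connectivity_quadratic_packing (G : SimpleGraph V) [DecidableRel G.Adj]
    (f : V → ℝ) (hf : ∀ v, 0 ≤ f v)
    (hpack : ∀ v, ∑ u ∈ G.neighborFinset v, f u * (f u + f v) ≤ 1) :
    ∀ i : ℕ, (i : ℝ) + 1 < ∑ v : V, (f v) ^ 2 → G.indepHomologyDim i = 0 := by
  intro i hi
  have hpack' : IsQuadraticPacking G univ f := fun v _ => by
    convert hpack v using 2
    ext
    simp
  have hacyc := cyclesAreBoundaries_of_isQuadraticPacking G univ f hf hpack' (i + 1)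
    (by push_cast; exact hi)
  have hker : LinearMap.ker (G.indepBoundary i).mulVecLin ≤
      LinearMap.range (G.indepBoundary (i + 1)).mulVecLin := by
    intro z hz
    obtain ⟨c, hc, hcz⟩ := hacyc (G.faceChain (i + 1) z) (G.isChain_faceChain z) (by
      rw [← G.faceChain_mulVec, ← mulVecLin_apply, LinearMap.mem_ker.1 hz, G.faceChain_zero])
    refine ⟨fun τ => c τ.1, funext fun σ => ?_⟩
    have := congrFun (G.faceChain_mulVec (k := i + 1) fun τ => c τ.1) σ.1
    rwa [G.faceChain_apply, G.faceChain_restrict hc, hcz, G.faceChain_apply] at this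
  exact Nat.sub_eq_zero_of_le (Submodule.finrank_mono hker)
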